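/- arXiv:1702.08376 — 2 statements merged into one kernel-verified Lean document; each statement's English description precedes it below -/
import Mathlib

section
/- (Proposition 1) Under the stated setup, if the matrix Ṁ_d(t) − 2 D_d(t) is negative semidefinite for all t ≥ 0, then the variable admittance system is passive with respect to the input–output pair (F_ext, ẋ): for every t ≥ 0, ∫₀ᵗ ẋ(τ)ᵀ F_ext(τ) dτ ≥ H(t) − H(0) ≥ −H(0). -/
/-!
Since `M_d` is symmetric, `Ḣ = ½ ẋᵀ Ṁ_d ẋ + ẋᵀ M_d ẍ`, so the power balance reads
`ẋᵀ F_ext − Ḣ = ½ ẋᵀ (2 D_d − Ṁ_d) ẋ ≥ 0`. Integrating this dissipation inequality over `[0, t]`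
gives the first bound, and the second is `H(t) ≥ 0`, as `M_d(t)` is positive definite.
-/

open Matrix

theorem Matrix.continuous_of_hasDerivAt_apply {m n : Type*} {M M' : ℝ → Matrix m n ℝ}
    (h : ∀ i j t, HasDerivAt (fun s => M s i j) (M' t i j) t) : Continuous M :=
  continuous_pi fun i => continuous_pi fun j =>
    continuous_iff_continuousAt.2 fun t => (h i j t).continuousAt

section
variable {ι m : Type*} [Fintype ι] {t : ℝ}

theorem HasDerivAt.dotProduct {u w : ℝ → ι → ℝ} {u' w' : ι → ℝ}
    (hu : HasDerivAt u u' t) (hw : HasDerivAt w w' t) :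
    HasDerivAt (fun s => u s ⬝ᵥ w s) (u' ⬝ᵥ w t + u t ⬝ᵥ w') t := by
  have : HasDerivAt (fun s => u s ⬝ᵥ w s) (∑ i, (u' i * w t i + u t i * w' i)) t :=
    HasDerivAt.fun_sum fun i _ => (hasDerivAt_pi.1 hu i).mul (hasDerivAt_pi.1 hw i)
  rwa [Finset.sum_add_distrib] at this

theorem HasDerivAt.matrix_mulVec {M : ℝ → Matrix m ι ℝ} {M' : Matrix m ι ℝ}
    {w : ℝ → ι → ℝ} {w' : ι → ℝ}
    (hM : ∀ i j, HasDerivAt (fun s => M s i j) (M' i j) t) (hw : HasDerivAt w w' t) :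
    HasDerivAt (fun s => M s *ᵥ w s) (M' *ᵥ w t + M t *ᵥ w') t :=
  hasDerivAt_pi.2 fun i => (hasDerivAt_pi.2 fun j => hM i j).dotProduct hw

theorem HasDerivAt.dotProduct_mulVec_self_of_isSymm {M : ℝ → Matrix ι ι ℝ} {M' : Matrix ι ι ℝ}
    {w : ℝ → ι → ℝ} {w' : ι → ℝ} (hsymm : (M t).IsSymm)
    (hM : ∀ i j, HasDerivAt (fun s => M s i j) (M' i j) t) (hw : HasDerivAt w w' t) :
    HasDerivAt (fun s => w s ⬝ᵥ (M s *ᵥ w s))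
      (w t ⬝ᵥ (M' *ᵥ w t) + 2 * (w t ⬝ᵥ (M t *ᵥ w'))) t := by
  convert hw.dotProduct (HasDerivAt.matrix_mulVec hM hw) using 1
  have : w' ⬝ᵥ (M t *ᵥ w t) = w t ⬝ᵥ (M t *ᵥ w') := by
    rw [dotProduct_mulVec, ← mulVec_transpose, hsymm.eq, dotProduct_comm]
  rw [this, dotProduct_add]
  ring

theorem storage_rate_le_supply_rate {M M' D : Matrix ι ι ℝ}
    (h : (-(M' - (2 : ℝ) • D)).PosSemidef) (v a : ι → ℝ) :
    (1 / 2) * (v ⬝ᵥ (M' *ᵥ v) + 2 * (v ⬝ᵥ (M *ᵥ a))) ≤ v ⬝ᵥ (M *ᵥ a + D *ᵥ v) := by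
  have hdiss := h.dotProduct_mulVec_nonneg v
  simp only [star_trivial, neg_mulVec, sub_mulVec, smul_mulVec, dotProduct_neg, dotProduct_sub,
    dotProduct_smul, smul_eq_mul] at hdiss
  rw [dotProduct_add]
  linarith

end

theorem passivity_condition_general {n : ℕ}
    (x : ℝ → Fin n → ℝ) (hx : ContDiff ℝ 2 x)
    (Md Dd Md' Dd' : ℝ → Matrix (Fin n) (Fin n) ℝ)
    (hMd' : ∀ i j t, HasDerivAt (fun s => Md s i j) (Md' t i j) t)
    (hDd' : ∀ i j t, HasDerivAt (fun s => Dd s i j) (Dd' t i j) t)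
    (hMdpd : ∀ t, (Md t).PosDef)
    (Fext : ℝ → Fin n → ℝ)
    (hFext : ∀ t, Fext t = Md t *ᵥ deriv (deriv x) t + Dd t *ᵥ deriv x t)
    (H : ℝ → ℝ)
    (hH : ∀ t, H t = (1 / 2) * (deriv x t ⬝ᵥ (Md t *ᵥ deriv x t)))
    (hcond : ∀ t ≥ (0 : ℝ), (-(Md' t - (2 : ℝ) • Dd t)).PosSemidef) :
    ∀ t ≥ (0 : ℝ),
      (∫ τ in (0 : ℝ)..t, deriv x τ ⬝ᵥ Fext τ) ≥ H t - H 0 ∧ H t - H 0 ≥ -H 0 := by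
  intro t ht
  have hH' (s : ℝ) : HasDerivAt H ((1 / 2) * (deriv x s ⬝ᵥ (Md' s *ᵥ deriv x s)
      + 2 * (deriv x s ⬝ᵥ (Md s *ᵥ deriv (deriv x) s)))) s := by
    rw [funext hH]
    exact (((hx.differentiable_deriv_two s).hasDerivAt).dotProduct_mulVec_self_of_isSymm
      (isHermitian_iff_isSymm.1 (hMdpd s).isHermitian) fun i j => hMd' i j s).const_mul _
  have hpower : Continuous fun τ => deriv x τ ⬝ᵥ Fext τ := by
    simp only [hFext]
    have hMd := continuous_of_hasDerivAt_apply hMd'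
    have hDd := continuous_of_hasDerivAt_apply hDd'
    have hv := hx.continuous_deriv one_le_two
    have ha := (ContDiff.deriv' (n := 1) hx).continuous_deriv_one
    fun_prop
  have hHt : 0 ≤ H t := by
    simpa [hH] using (hMdpd t).posSemidef.dotProduct_mulVec_nonneg (deriv x t)
  refine ⟨intervalIntegral.sub_le_integral_of_hasDeriv_right_of_le ht
    (fun s _ => (hH' s).continuousAt.continuousWithinAt) (fun s _ => (hH' s).hasDerivWithinAt)
    hpower.integrableOn_Icc fun s hs => ?_, by linarith⟩
  rw [hFext]
  exact storage_rate_le_supply_rate (hcond s hs.1.le) _ _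

/-- **Proposition 1.** If `Ṁ_d(t) − 2 D_d(t)` is negative semidefinite for all
`t ≥ 0`, then the variable admittance system is passive with respect to `(F_ext, ẋ)`:
for every `t ≥ 0`, `∫₀ᵗ ẋᵀ F_ext dτ ≥ H(t) − H(0) ≥ −H(0)`. -/
theorem passivity_condition {n : ℕ} (hn : 0 < n)
    (x : ℝ → Fin n → ℝ) (hx : ContDiff ℝ 2 x)
    (Md Dd Md' Dd' : ℝ → Matrix (Fin n) (Fin n) ℝ)
    (hMd' : ∀ i j t, HasDerivAt (fun s => Md s i j) (Md' t i j) t)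
    (hMd'cont : ∀ i j, Continuous fun t => Md' t i j)
    (hDd' : ∀ i j t, HasDerivAt (fun s => Dd s i j) (Dd' t i j) t)
    (hDd'cont : ∀ i j, Continuous fun t => Dd' t i j)
    (hMdpd : ∀ t, (Md t).PosDef) (hDdpd : ∀ t, (Dd t).PosDef)
    (Fext : ℝ → Fin n → ℝ)
    (hFext : ∀ t, Fext t = Md t *ᵥ deriv (deriv x) t + Dd t *ᵥ deriv x t)
    (H : ℝ → ℝ)
    (hH : ∀ t, H t = (1 / 2) * (deriv x t ⬝ᵥ (Md t *ᵥ deriv x t)))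
    (hcond : ∀ t ≥ (0 : ℝ), (-(Md' t - (2 : ℝ) • Dd t)).PosSemidef) :
    ∀ t ≥ (0 : ℝ),
      (∫ τ in (0 : ℝ)..t, deriv x τ ⬝ᵥ Fext τ) ≥ H t - H 0 ∧ H t - H 0 ≥ -H 0 :=
  passivity_condition_general x hx Md Dd Md' Dd' hMd' hDd' hMdpd Fext hFext H hH hcond
end

section
/- Under the stated tank setup, suppose the switching signals satisfy: φ(t) = 0 whenever T(t) > T̄, and γ(t) = φ(t) whenever P_M(t) ≤ 0 while γ(t) = 1 whenever P_M(t) > 0 (so that energy injection into the tank is disabled above the level T̄ while extraction is always allowed). If T(0) ≤ T̄, then T(t) ≤ T̄ for all t ≥ 0. -/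
open Matrix

/-- Under the tank setup, if `φ(t) = 0` whenever `T(t) > T̄`, `γ(t) = φ(t)`
whenever `P_M(t) ≤ 0`, and `γ(t) = 1` whenever `P_M(t) > 0` (energy injection into the tank
is disabled above `T̄` while extraction is always allowed), then `T(0) ≤ T̄` implies
`T(t) ≤ T̄` for all `t ≥ 0`. -/
theorem tank_energy_upper_bound {n : ℕ} (hn : 0 < n)
    (x : ℝ → Fin n → ℝ) (hx : ContDiff ℝ 2 x)
    (Md Dd Md' Dd' : ℝ → Matrix (Fin n) (Fin n) ℝ)
    (hMd' : ∀ i j t, HasDerivAt (fun s => Md s i j) (Md' t i j) t)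
    (hMd'cont : ∀ i j, Continuous fun t => Md' t i j)
    (hDd' : ∀ i j t, HasDerivAt (fun s => Dd s i j) (Dd' t i j) t)
    (hDd'cont : ∀ i j, Continuous fun t => Dd' t i j)
    (hMdpd : ∀ t, (Md t).PosDef) (hDdpd : ∀ t, (Dd t).PosDef)
    (PD PM : ℝ → ℝ)
    (hPD : ∀ t, PD t = deriv x t ⬝ᵥ (Dd t *ᵥ deriv x t))
    (hPM : ∀ t, PM t = (1 / 2) * (deriv x t ⬝ᵥ (Md' t *ᵥ deriv x t)))
    (φ γ : ℝ → ℝ)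
    (hφ : ∀ t, φ t = 0 ∨ φ t = 1) (hγ : ∀ t, γ t = 0 ∨ γ t = 1)
    (z : ℝ → ℝ) (hz : ∀ t, z t ≠ 0)
    (hzdyn : ∀ t, HasDerivAt z (φ t / z t * PD t - γ t / z t * PM t) t)
    (T : ℝ → ℝ) (hT : ∀ t, T t = (1 / 2) * z t ^ 2)
    (Tbar : ℝ) (hTbar : 0 < Tbar)
    (hφ0 : ∀ t, T t > Tbar → φ t = 0)
    (hγφ : ∀ t, PM t ≤ 0 → γ t = φ t)
    (hγ1 : ∀ t, 0 < PM t → γ t = 1)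
    (hT0 : T 0 ≤ Tbar) :
    ∀ t ≥ (0 : ℝ), T t ≤ Tbar := by
  have hTd : ∀ t, HasDerivAt T (φ t * PD t - γ t * PM t) t := by
    intro t
    have h1 : HasDerivAt (fun s => (1 : ℝ) / 2 * z s ^ 2)
        ((1 : ℝ) / 2 * (2 * z t ^ 1 * (φ t / z t * PD t - γ t / z t * PM t))) t :=
      ((hzdyn t).pow 2).const_mul _
    have hE : (1 : ℝ) / 2 * (2 * z t ^ 1 * (φ t / z t * PD t - γ t / z t * PM t))
        = φ t * PD t - γ t * PM t := by
      field_simp [hz t]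
    have hfun : T = fun s => (1 : ℝ) / 2 * z s ^ 2 := funext hT
    rw [hfun, ← hE]; exact h1
  have hTc : Continuous T := by
    apply continuous_iff_continuousAt.2
    intro t; exact (hTd t).continuousAt
  intro t ht
  by_contra hlt
  push_neg at hlt
  set S := {s : ℝ | s ∈ Set.Icc 0 t ∧ T s ≤ Tbar} with hS
  have hSne : S.Nonempty := ⟨0, ⟨le_refl 0, ht⟩, hT0⟩
  have hSbdd : BddAbove S := ⟨t, fun u hu => hu.1.2⟩
  have hSclosed : IsClosed S :=
    (isClosed_Icc.inter (isClosed_le hTc continuous_const))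
  have hsmem : sSup S ∈ S := hSclosed.csSup_mem hSne hSbdd
  set s := sSup S with hsdef
  have hst : s ≤ t := hsmem.1.2
  have hTs : T s ≤ Tbar := hsmem.2
  have hsne : s ≠ t := by
    intro h; rw [h] at hTs; linarith
  have hslt : s < t := lt_of_le_of_ne hst hsne
  have hgt : ∀ u ∈ Set.Ioo s t, Tbar < T u := by
    intro u hu
    by_contra h
    push_neg at h
    have : u ∈ S := ⟨⟨le_trans hsmem.1.1 hu.1.le, hu.2.le⟩, h⟩
    have := le_csSup hSbdd this
    linarith [hu.1]
  have hanti : AntitoneOn T (Set.Icc s t) := by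
    apply antitoneOn_of_deriv_nonpos (convex_Icc s t) hTc.continuousOn
    · intro u hu
      exact (hTd u).differentiableAt.differentiableWithinAt
    · intro u hu
      rw [interior_Icc] at hu
      rw [(hTd u).deriv]
      have hφu : φ u = 0 := hφ0 u (hgt u hu)
      rcases le_or_gt (PM u) 0 with hpm | hpm
      · rw [hγφ u hpm, hφu]; ring_nf; exact le_refl 0
      · rw [hγ1 u hpm, hφu]; nlinarith
  have := hanti (Set.left_mem_Icc.2 hst) (Set.right_mem_Icc.2 hst) hst
  linarith
end
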